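/- Suppose [a, b] is a P_M-maximizing interval and [a', b'] is a P_{M'}-maximizing interval with M' > M. If a' < a then b' ≥ b; equivalently, if b' < b then a' ≥ a; and in all cases a' ≥ a or b' ≥ b. -/

import Mathlib

/-!
Suppose `a' < a` and `b' < b`. Then `a' ∉ [a, b]` and `b ∉ [a', b']`, so exchanging one point
for the other in each maximizing interval gives `P_M(a') ≤ P_M(b)` and `P_{M'}(b) ≤ P_{M'}(a')`.
Since `P_M(b) > 0` and `P_{M'}(a') > 0`, the whole range `[a', b]` lies in the support of both
pmfs, and there the likelihood ratio `P_{M'}(x) / P_M(x)` is strictly increasing in `x`: its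
consecutive quotients are `(M' - x)(N - M - n + x + 1) / ((M - x)(N - M' - n + x + 1)) > 1`.
Hence `P_{M'}(a') P_M(b) < P_{M'}(b) P_M(a')`, contradicting the product of the two exchange
inequalities.
-/

def hyperPMF (M n N x : ℕ) : ℚ :=
  if x ≤ n then (M.choose x * (N - M).choose (n - x) : ℚ) / (N.choose n) else 0

/-- The interval [a,b] ⊆ {0,…,n} is P_M-maximizing: all its points have positive
probability and it maximizes P_M-probability among subsets of the same cardinality. -/
def PMaximizingInterval (n N M a b : ℕ) : Prop :=
  a ≤ b ∧ b ≤ n ∧ (∀ x ∈ Finset.Icc a b, 0 < hyperPMF M n N x) ∧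
    ∀ T : Finset ℕ, T ⊆ Finset.range (n + 1) → T.card = b - a + 1 →
      (∑ x ∈ T, hyperPMF M n N x) ≤ ∑ x ∈ Finset.Icc a b, hyperPMF M n N x

open Finset

theorem Finset.apply_le_apply_of_sum_maximal {α β : Type*} [DecidableEq α] [AddCommMonoid β]
    [PartialOrder β] [IsOrderedCancelAddMonoid β] {f : α → β} {S U : Finset α} {y z : α}
    (hSU : S ⊆ U) (hmax : ∀ T ⊆ U, #T = #S → ∑ x ∈ T, f x ≤ ∑ x ∈ S, f x)
    (hy : y ∈ S) (hz : z ∈ U) (hzS : z ∉ S) : f z ≤ f y := by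
  have hz_erase : z ∉ S.erase y := fun h => hzS (mem_of_mem_erase h)
  have hT : insert z (S.erase y) ⊆ U :=
    insert_subset hz ((erase_subset y S).trans hSU)
  have hcard : #(insert z (S.erase y)) = #S := by
    rw [card_insert_of_notMem hz_erase, card_erase_add_one hy]
  have hsum := hmax _ hT hcard
  rw [sum_insert hz_erase, ← add_sum_erase S f hy] at hsum
  exact le_of_add_le_add_right hsum

theorem PMaximizingInterval.hyperPMF_le {n N M a b y z : ℕ} (h : PMaximizingInterval n N M a b)
    (hy : y ∈ Icc a b) (hz : z ≤ n) (hz_ab : z ∉ Icc a b) :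
    hyperPMF M n N z ≤ hyperPMF M n N y := by
  obtain ⟨hab, hbn, -, hmax⟩ := h
  refine apply_le_apply_of_sum_maximal ?_ ?_ hy (mem_range.2 (Nat.lt_succ_of_le hz)) hz_ab
  · intro x hx
    simp only [mem_Icc] at hx
    exact mem_range.2 (by omega)
  · intro T hT hcard
    exact hmax T hT (by rw [hcard, Nat.card_Icc]; omega)

theorem hyperPMF_nonneg (M n N x : ℕ) : 0 ≤ hyperPMF M n N x := by
  unfold hyperPMF
  split_ifs <;> positivity

def hyperWeight (M n N x : ℕ) : ℕ := M.choose x * (N - M).choose (n - x)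

theorem hyperWeight_pos_iff {M n N x : ℕ} :
    0 < hyperWeight M n N x ↔ x ≤ M ∧ n - x ≤ N - M := by
  simp only [hyperWeight, Nat.pos_iff_ne_zero, mul_ne_zero_iff, ne_eq, Nat.choose_eq_zero_iff,
    not_lt]

theorem hyperPMF_eq_hyperWeight_div {M n N x : ℕ} (hx : x ≤ n) :
    hyperPMF M n N x = hyperWeight M n N x / N.choose n := by
  simp [hyperPMF, hyperWeight, hx]

theorem hyperPMF_pos_iff {M n N x : ℕ} :
    0 < hyperPMF M n N x ↔ x ≤ n ∧ n ≤ N ∧ 0 < hyperWeight M n N x := by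
  by_cases hx : x ≤ n
  · have hC : (0 : ℚ) ≤ N.choose n := Nat.cast_nonneg _
    have hw : (0 : ℚ) ≤ hyperWeight M n N x := Nat.cast_nonneg _
    simp [hyperPMF_eq_hyperWeight_div hx, div_pos_iff, hx, hC.not_gt, hw.not_gt,
      Nat.pos_iff_ne_zero (n := N.choose n), Nat.choose_eq_zero_iff, and_comm]
  · simp [hyperPMF, hx]

theorem hyperWeight_succ_mul {K n N x : ℕ} (hx : x < n) :
    hyperWeight K n N (x + 1) * ((x + 1) * (N - K - (n - (x + 1)))) =
      hyperWeight K n N x * ((K - x) * (n - x)) := by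
  obtain ⟨j, rfl⟩ : ∃ j, n = x + 1 + j := ⟨n - (x + 1), by omega⟩
  have hj : x + 1 + j - x = j + 1 := by omega
  simp only [hyperWeight, Nat.add_sub_cancel_left, hj]
  calc K.choose (x + 1) * (N - K).choose j * ((x + 1) * (N - K - j))
      = (K.choose (x + 1) * (x + 1)) * ((N - K).choose j * (N - K - j)) := by ring
    _ = (K.choose x * (K - x)) * ((N - K).choose (j + 1) * (j + 1)) := by
      rw [Nat.choose_succ_right_eq, Nat.choose_succ_right_eq]
    _ = K.choose x * (N - K).choose (j + 1) * ((K - x) * (j + 1)) := by ring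

theorem hyperWeight_cross_mul_lt_succ {M M' n N x : ℕ} (hMM' : M < M') (hxM : x < M)
    (hxn : x < n) (hx : n - x ≤ N - M') :
    hyperWeight M' n N x * hyperWeight M n N (x + 1) <
      hyperWeight M' n N (x + 1) * hyperWeight M n N x := by
  set k := n - (x + 1)
  have hw : 0 < hyperWeight M' n N x * hyperWeight M n N x * ((x + 1) * (n - x)) :=
    Nat.mul_pos (Nat.mul_pos (hyperWeight_pos_iff.2 ⟨by omega, hx⟩)
      (hyperWeight_pos_iff.2 ⟨hxM.le, by omega⟩)) (Nat.mul_pos x.succ_pos (by omega))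
  have hfactor : (N - M' - k) * (M - x) < (N - M - k) * (M' - x) :=
    Nat.mul_lt_mul'' (by omega) (by omega)
  have hD : 0 < (x + 1) * (N - M' - k) * ((x + 1) * (N - M - k)) :=
    Nat.mul_pos (Nat.mul_pos x.succ_pos (by omega)) (Nat.mul_pos x.succ_pos (by omega))
  -- clear the denominators of the two consecutive ratios given by `hyperWeight_succ_mul`
  refine lt_of_mul_lt_mul_right ?_ hD.le
  calc hyperWeight M' n N x * hyperWeight M n N (x + 1) *
        ((x + 1) * (N - M' - k) * ((x + 1) * (N - M - k)))
      = hyperWeight M' n N x * ((x + 1) * (N - M' - k)) *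
          (hyperWeight M n N (x + 1) * ((x + 1) * (N - M - k))) := by ring
    _ = hyperWeight M' n N x * hyperWeight M n N x * ((x + 1) * (n - x)) *
          ((N - M' - k) * (M - x)) := by rw [hyperWeight_succ_mul hxn]; ring
    _ < hyperWeight M' n N x * hyperWeight M n N x * ((x + 1) * (n - x)) *
          ((N - M - k) * (M' - x)) := Nat.mul_lt_mul_of_pos_left hfactor hw
    _ = hyperWeight M' n N (x + 1) * ((x + 1) * (N - M' - k)) *
          (hyperWeight M n N x * ((x + 1) * (N - M - k))) := by
      rw [hyperWeight_succ_mul hxn]; ring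
    _ = hyperWeight M' n N (x + 1) * hyperWeight M n N x *
          ((x + 1) * (N - M' - k) * ((x + 1) * (N - M - k))) := by ring

theorem strictMonoOn_hyperWeight_ratio {M M' n N : ℕ} (hMM' : M < M') :
    StrictMonoOn (fun x => (hyperWeight M' n N x : ℚ) / hyperWeight M n N x)
      (Set.Icc (n - (N - M')) (min M n)) := by
  refine strictMonoOn_of_lt_add_one Set.ordConnected_Icc fun x _ hx hx1 => ?_
  simp only [Set.mem_Icc, le_min_iff] at hx hx1
  have hpos : ∀ y, n - (N - M') ≤ y → y ≤ M → (0 : ℚ) < hyperWeight M n N y :=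
    fun y hy hyM => Nat.cast_pos.2 (hyperWeight_pos_iff.2 ⟨hyM, by omega⟩)
  rw [div_lt_div_iff₀ (hpos x hx.1 hx.2.1) (hpos (x + 1) hx1.1 hx1.2.1)]
  exact_mod_cast hyperWeight_cross_mul_lt_succ hMM' (by omega) (by omega) (by omega)

theorem hyperPMF_cross_mul_lt {M M' n N x₁ x₂ : ℕ} (hMM' : M < M') (hx : x₁ < x₂)
    (h₁ : 0 < hyperPMF M' n N x₁) (h₂ : 0 < hyperPMF M n N x₂) :
    hyperPMF M' n N x₁ * hyperPMF M n N x₂ < hyperPMF M' n N x₂ * hyperPMF M n N x₁ := by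
  obtain ⟨hx₁n, hnN, hw₁⟩ := hyperPMF_pos_iff.1 h₁
  obtain ⟨hx₂n, -, hw₂⟩ := hyperPMF_pos_iff.1 h₂
  rw [hyperWeight_pos_iff] at hw₁ hw₂
  have hratio := strictMonoOn_hyperWeight_ratio (n := n) (N := N) hMM'
    (a := x₁) (b := x₂) ⟨by omega, by omega⟩ ⟨by omega, by omega⟩ hx
  have hM₁ : (0 : ℚ) < hyperWeight M n N x₁ :=
    Nat.cast_pos.2 (hyperWeight_pos_iff.2 ⟨by omega, by omega⟩)
  have hM₂ : (0 : ℚ) < hyperWeight M n N x₂ := Nat.cast_pos.2 (hyperWeight_pos_iff.2 hw₂)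
  rw [div_lt_div_iff₀ hM₁ hM₂] at hratio
  have hC : (0 : ℚ) < N.choose n := Nat.cast_pos.2 (Nat.choose_pos hnN)
  simp only [hyperPMF_eq_hyperWeight_div, hx₁n, hx₂n, div_mul_div_comm]
  exact div_lt_div_of_pos_right hratio (by positivity)

theorem hyperPMF_maximizing_intervals_order_general (n N M M' a b a' b' : ℕ)
    (hMM' : M < M')
    (h1 : PMaximizingInterval n N M a b) (h2 : PMaximizingInterval n N M' a' b') :
    (a' < a → b ≤ b') ∧ (b' < b → a ≤ a') ∧ (a ≤ a' ∨ b ≤ b') := by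
  suffices ¬(a' < a ∧ b' < b) by omega
  rintro ⟨ha, hb⟩
  obtain ⟨hab, hbn, hpos, -⟩ := id h1
  obtain ⟨hab', -, hpos', -⟩ := id h2
  have hb_mem : b ∈ Icc a b := right_mem_Icc.2 hab
  have ha'_mem : a' ∈ Icc a' b' := left_mem_Icc.2 hab'
  have hP : hyperPMF M n N a' ≤ hyperPMF M n N b :=
    h1.hyperPMF_le hb_mem (by omega) (by simp only [mem_Icc]; omega)
  have hP' : hyperPMF M' n N b ≤ hyperPMF M' n N a' :=
    h2.hyperPMF_le ha'_mem hbn (by simp only [mem_Icc]; omega)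
  have hlt := hyperPMF_cross_mul_lt hMM' (by omega) (hpos' a' ha'_mem) (hpos b hb_mem)
  exact (mul_le_mul hP' hP (hyperPMF_nonneg _ _ _ _) (hyperPMF_nonneg _ _ _ _)).not_gt hlt

/-- If [a,b] is P_M-maximizing and [a',b'] is P_{M'}-maximizing with M' > M, then
a' < a implies b' ≥ b; equivalently b' < b implies a' ≥ a; and always a' ≥ a or b' ≥ b. -/
theorem hyperPMF_maximizing_intervals_order (n N M M' a b a' b' : ℕ)
    (hn : 0 < n) (hnN : n ≤ N) (hMM' : M < M') (hM' : M' ≤ N)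
    (h1 : PMaximizingInterval n N M a b) (h2 : PMaximizingInterval n N M' a' b') :
    (a' < a → b ≤ b') ∧ (b' < b → a ≤ a') ∧ (a ≤ a' ∨ b ≤ b') :=
  hyperPMF_maximizing_intervals_order_general n N M M' a b a' b' hMM' h1 h2
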